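/- arXiv:1612.03622 — 3 statements merged into one kernel-verified Lean document; each statement's English description precedes it below -/
import Mathlib

section
/- Let q ∈ L¹[0,1] be real-valued, t ∈ [0,π), and suppose λ₀(t) is the smallest eigenvalue of the quasi-periodic problem -y'' + qy = λy, y(1)=e^{it}y(0), y'(1)=e^{it}y'(0). If λ₀(t) ≥ t² + ∫₀¹ q(x) dx, then λ₀(t) = t² + ∫₀¹ q(x) dx and y(x) = e^{itx} is a corresponding eigenfunction. -/
/-! Testing the variational principle with `y = e^{itx} u(x)`, `u` real with `u(0) = u(1)`,
`u'(0) = u'(1)`, and integrating by parts gives `λ₀ ∫ u² ≤ t² ∫ u² + ∫ q u² + ∫ u'²`.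
For `u = 1` this reads `λ₀ ≤ t² + ∫ q`, whence equality. For `u = 1 + εg` with `g` supported in
`(0,1)` it becomes a quadratic inequality in `ε` whose linear coefficient must vanish, i.e.
`∫ (q - ∫ q) g = 0`. By the fundamental lemma of the calculus of variations `q` is a.e. constant
on `[0,1]`, and then `e^{itx}` solves `-y'' + q y = (t² + ∫ q) y`. -/

open MeasureTheory intervalIntegral Complex

/-- The (real-valued) Rayleigh quotient of `y` for the operator `-y'' + q y` on `[0,1]`. -/
noncomputable def rayleighQuotientR (q : ℝ → ℝ) (y : ℝ → ℂ) : ℝ :=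
  (∫ x in (0:ℝ)..1,
      ((-(starRingEnd ℂ) (y x) * deriv (deriv y) x).re + q x * ‖y x‖^2)) /
  (∫ x in (0:ℝ)..1, ‖y x‖^2)

/-- Quasi-periodic boundary conditions for parameter `t`. -/
def QuasiPeriodicBC (t : ℝ) (y : ℝ → ℂ) : Prop :=
  y 1 = Complex.exp (Complex.I * t) * y 0 ∧ deriv y 1 = Complex.exp (Complex.I * t) * deriv y 0

/-- `y` is an eigenfunction of `L_t(q)` with eigenvalue `lam`. -/
def IsEigenfunction (q : ℝ → ℝ) (t lam : ℝ) (y : ℝ → ℂ) : Prop :=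
  ContDiff ℝ 2 y ∧ (∃ x ∈ Set.Icc (0:ℝ) 1, y x ≠ 0) ∧ QuasiPeriodicBC t y ∧
  ∀ᵐ x, x ∈ Set.Icc (0:ℝ) 1 → -deriv (deriv y) x + (q x : ℂ) * y x = (lam : ℂ) * y x

/-- `lam` is an eigenvalue of `L_t(q)`. -/
def IsEigenvalue (q : ℝ → ℝ) (t lam : ℝ) : Prop := ∃ y, IsEigenfunction q t lam y

/-- `lam0` is the smallest eigenvalue of `L_t(q)`. -/
def IsFirstEigenvalue (q : ℝ → ℝ) (t lam0 : ℝ) : Prop :=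
  IsEigenvalue q t lam0 ∧ ∀ lam, IsEigenvalue q t lam → lam0 ≤ lam

noncomputable def planeWave (t x : ℝ) : ℂ := exp (I * t * x)

section

variable {t : ℝ}

lemma hasDerivAt_planeWave (t x : ℝ) : HasDerivAt (planeWave t) (planeWave t x * (I * t)) x := by
  have h := ((hasDerivAt_id (x : ℂ)).const_mul (I * t)).cexp
  simp only [id, mul_one] at h
  exact h.comp_ofReal

lemma contDiff_planeWave (t : ℝ) : ContDiff ℝ 2 (planeWave t) :=
  contDiff_exp.comp (contDiff_const.mul ofRealCLM.contDiff)

lemma norm_planeWave (t x : ℝ) : ‖planeWave t x‖ = 1 := by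
  simp [planeWave, norm_exp]

lemma conj_planeWave_mul_self (t x : ℝ) : starRingEnd ℂ (planeWave t x) * planeWave t x = 1 := by
  rw [mul_comm, mul_conj, normSq_eq_norm_sq, norm_planeWave]
  norm_num

lemma HasDerivAt.planeWave_mul {f : ℝ → ℂ} {f' : ℂ} {x : ℝ} (hf : HasDerivAt f f' x) :
    HasDerivAt (fun x => planeWave t x * f x) (planeWave t x * (I * t * f x + f')) x :=
  ((hasDerivAt_planeWave t x).mul hf).congr_deriv (by ring)

variable {u : ℝ → ℝ}

lemma deriv_planeWave_mul_ofReal (hu : Differentiable ℝ u) :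
    deriv (fun x => planeWave t x * u x) = fun x => planeWave t x * (I * t * u x + deriv u x) :=
  funext fun x => ((hu x).hasDerivAt.ofReal_comp.planeWave_mul).deriv

lemma deriv_deriv_planeWave_mul_ofReal (hu : ContDiff ℝ 2 u) (x : ℝ) :
    deriv (deriv (fun x => planeWave t x * u x)) x =
      planeWave t x * ((I * t) ^ 2 * u x + 2 * I * t * deriv u x + deriv (deriv u) x) := by
  have hu' : Differentiable ℝ (deriv u) := (hu.iterate_deriv' 1 1).differentiable one_ne_zero
  rw [deriv_planeWave_mul_ofReal (hu.differentiable two_ne_zero)]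
  have h : HasDerivAt (fun x => I * t * u x + deriv u x)
      (I * t * deriv u x + deriv (deriv u) x) x :=
    (((hu.differentiable two_ne_zero x).hasDerivAt.ofReal_comp).const_mul (I * t)).add
      (hu' x).hasDerivAt.ofReal_comp
  rw [h.planeWave_mul.deriv]
  ring

lemma re_neg_conj_mul_deriv_deriv_planeWave_mul_ofReal (hu : ContDiff ℝ 2 u) (x : ℝ) :
    (-starRingEnd ℂ (planeWave t x * u x) * deriv (deriv (fun x => planeWave t x * u x)) x).re =
      t ^ 2 * u x ^ 2 - u x * deriv (deriv u) x := by
  rw [deriv_deriv_planeWave_mul_ofReal hu, map_mul, conj_ofReal]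
  have h := conj_planeWave_mul_self t x
  have : -(starRingEnd ℂ (planeWave t x) * u x) *
      (planeWave t x * ((I * t) ^ 2 * u x + 2 * I * t * deriv u x + deriv (deriv u) x)) =
      -(u x * ((I * t) ^ 2 * u x + 2 * I * t * deriv u x + deriv (deriv u) x)) := by
    linear_combination (-(u x * ((I * t) ^ 2 * u x + 2 * I * t * deriv u x
      + deriv (deriv u) x)) : ℂ) * h
  rw [this]
  simp [sq, mul_re, mul_im]
  ring

lemma norm_planeWave_mul_ofReal_sq (t x : ℝ) (u : ℝ → ℝ) :
    ‖planeWave t x * u x‖ ^ 2 = u x ^ 2 := by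
  rw [norm_mul, norm_planeWave, one_mul, norm_real, Real.norm_eq_abs, sq_abs]

lemma quasiPeriodicBC_planeWave_mul_ofReal (hu : Differentiable ℝ u) (h₀ : u 1 = u 0)
    (h₁ : deriv u 1 = deriv u 0) : QuasiPeriodicBC t (fun x => planeWave t x * u x) := by
  refine ⟨?_, ?_⟩
  · simp [planeWave, h₀]
  · rw [deriv_planeWave_mul_ofReal hu]
    simp [planeWave, h₀, h₁]

end

section

variable {u : ℝ → ℝ}

lemma integral_mul_deriv_deriv_of_periodic (hu : ContDiff ℝ 2 u) (h₀ : u 1 = u 0)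
    (h₁ : deriv u 1 = deriv u 0) :
    ∫ x in (0:ℝ)..1, u x * deriv (deriv u) x = -∫ x in (0:ℝ)..1, deriv u x ^ 2 := by
  have hu' : ContDiff ℝ 1 (deriv u) := hu.iterate_deriv' 1 1
  rw [integral_mul_deriv_eq_deriv_mul (fun x _ => (hu.differentiable two_ne_zero x).hasDerivAt)
    (fun x _ => (hu'.differentiable one_ne_zero x).hasDerivAt)
    ((hu.continuous_deriv one_le_two).intervalIntegrable 0 1)
    ((hu'.continuous_deriv le_rfl).intervalIntegrable 0 1), h₀, h₁]
  simp [sq]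

lemma integral_sq_pos {a b : ℝ} (hab : a < b) (hu : Continuous u)
    (hne : ∃ x ∈ Set.Icc a b, u x ≠ 0) :
    0 < ∫ x in a..b, u x ^ 2 := by
  obtain ⟨x, hx, hux⟩ := hne
  exact integral_pos hab (hu.pow 2).continuousOn (fun _ _ => sq_nonneg _) ⟨x, hx, by positivity⟩

lemma rayleighQuotientR_planeWave_mul_ofReal {q : ℝ → ℝ} (hq : IntervalIntegrable q volume 0 1)
    (t : ℝ) (hu : ContDiff ℝ 2 u) (h₀ : u 1 = u 0) (h₁ : deriv u 1 = deriv u 0) :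
    rayleighQuotientR q (fun x => planeWave t x * u x) =
      (t ^ 2 * (∫ x in (0:ℝ)..1, u x ^ 2) + (∫ x in (0:ℝ)..1, q x * u x ^ 2)
        + ∫ x in (0:ℝ)..1, deriv u x ^ 2) / ∫ x in (0:ℝ)..1, u x ^ 2 := by
  have hu2 : IntervalIntegrable (fun x => u x ^ 2) volume 0 1 :=
    (hu.continuous.pow 2).intervalIntegrable 0 1
  have huu : IntervalIntegrable (fun x => u x * deriv (deriv u) x) volume 0 1 :=
    (hu.continuous.mul (hu.iterate_deriv' 0 2).continuous).intervalIntegrable 0 1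
  have hqu : IntervalIntegrable (fun x => q x * u x ^ 2) volume 0 1 :=
    hq.mul_continuousOn (hu.continuous.pow 2).continuousOn
  simp only [rayleighQuotientR, re_neg_conj_mul_deriv_deriv_planeWave_mul_ofReal hu,
    norm_planeWave_mul_ofReal_sq]
  rw [integral_add ((hu2.const_mul _).sub huu) hqu, integral_sub (hu2.const_mul _) huu,
    intervalIntegral.integral_const_mul, integral_mul_deriv_deriv_of_periodic hu h₀ h₁]
  ring

end

lemma integral_mul_eq_zero_of_forall_nonneg {w g : ℝ → ℝ} {a b C : ℝ}
    (hw : IntervalIntegrable w volume a b) (hw₀ : ∫ x in a..b, w x = 0) (hg : Continuous g)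
    (h : ∀ ε : ℝ, 0 ≤ (∫ x in a..b, w x * (1 + ε * g x) ^ 2) + ε ^ 2 * C) :
    ∫ x in a..b, w x * g x = 0 := by
  have hwg : IntervalIntegrable (fun x => w x * g x) volume a b :=
    hw.mul_continuousOn hg.continuousOn
  have hwg2 : IntervalIntegrable (fun x => w x * g x ^ 2) volume a b :=
    hw.mul_continuousOn (hg.pow 2).continuousOn
  have hexpand : ∀ ε : ℝ, ∫ x in a..b, w x * (1 + ε * g x) ^ 2 =
      (∫ x in a..b, w x) + 2 * ε * (∫ x in a..b, w x * g x)
        + ε ^ 2 * ∫ x in a..b, w x * g x ^ 2 := by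
    intro ε
    have hpt : (fun x => w x * (1 + ε * g x) ^ 2) =
        fun x => w x + (2 * ε) * (w x * g x) + ε ^ 2 * (w x * g x ^ 2) := by
      funext x; ring
    rw [hpt, integral_add (hw.add (hwg.const_mul _)) (hwg2.const_mul _),
      integral_add hw (hwg.const_mul _), intervalIntegral.integral_const_mul,
      intervalIntegral.integral_const_mul]
  have hdiscrim := discrim_le_zero (a := (∫ x in a..b, w x * g x ^ 2) + C)
    (b := 2 * ∫ x in a..b, w x * g x) (c := 0) fun ε => by
      have := h ε
      rw [hexpand, hw₀] at this
      linarith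
  rw [discrim] at hdiscrim
  nlinarith [sq_nonneg (∫ x in a..b, w x * g x)]

lemma eq_zero_and_deriv_eq_zero_of_notMem_tsupport {g : ℝ → ℝ} {z : ℝ} (hz : z ∉ tsupport g) :
    g z = 0 ∧ deriv g z = 0 :=
  ⟨image_eq_zero_of_notMem_tsupport hz,
    image_eq_zero_of_notMem_tsupport fun h => hz (tsupport_deriv_subset h)⟩

open scoped ContDiff in
lemma ae_eq_of_forall_integral_sub_mul_eq_zero {f : ℝ → ℝ} {a b c : ℝ} (hab : a ≤ b)
    (hf : IntegrableOn f (Set.Icc a b))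
    (h : ∀ g : ℝ → ℝ, ContDiff ℝ ∞ g → tsupport g ⊆ Set.Ioo a b →
      ∫ x in a..b, (f x - c) * g x = 0) :
    ∀ᵐ x, x ∈ Set.Icc a b → f x = c := by
  have hIoo : ∀ᵐ x, x ∈ Set.Ioo a b → f x - c = 0 := by
    refine isOpen_Ioo.ae_eq_zero_of_integral_contDiff_smul_eq_zero ?_ fun g hg _ hsupp => ?_
    · exact ((hf.mono_set Set.Ioo_subset_Icc_self).sub
        (integrableOn_const measure_Ioo_lt_top.ne)).locallyIntegrableOn
    · rw [← setIntegral_eq_integral_of_forall_compl_eq_zero (s := Set.Ioc a b) fun x hx => by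
        simp [image_eq_zero_of_notMem_tsupport fun h => hx (Set.Ioo_subset_Ioc_self (hsupp h))],
        ← integral_of_le hab]
      simpa [mul_comm] using h g hg hsupp
  rw [← ae_restrict_iff' measurableSet_Icc, ← Measure.restrict_congr_set Ioo_ae_eq_Icc,
    ae_restrict_iff' measurableSet_Ioo]
  filter_upwards [hIoo] with x hx hmem
  exact sub_eq_zero.mp (hx hmem)

def IsVariationalLowerBound (q : ℝ → ℝ) (t lam : ℝ) : Prop :=
  ∀ y : ℝ → ℂ, ContDiff ℝ 2 y → (∃ x ∈ Set.Icc (0:ℝ) 1, y x ≠ 0) →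
    QuasiPeriodicBC t y → lam ≤ rayleighQuotientR q y

namespace IsVariationalLowerBound

variable {q : ℝ → ℝ} {t lam : ℝ}

lemma mul_integral_sq_le (h : IsVariationalLowerBound q t lam)
    (hq : IntervalIntegrable q volume 0 1) {u : ℝ → ℝ} (hu : ContDiff ℝ 2 u) (h₀ : u 1 = u 0)
    (h₁ : deriv u 1 = deriv u 0) (hne : ∃ x ∈ Set.Icc (0:ℝ) 1, u x ≠ 0) :
    lam * ∫ x in (0:ℝ)..1, u x ^ 2 ≤
      t ^ 2 * (∫ x in (0:ℝ)..1, u x ^ 2) + (∫ x in (0:ℝ)..1, q x * u x ^ 2)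
        + ∫ x in (0:ℝ)..1, deriv u x ^ 2 := by
  have hy : ∃ x ∈ Set.Icc (0:ℝ) 1, planeWave t x * u x ≠ 0 := by
    obtain ⟨x, hx, hux⟩ := hne
    exact ⟨x, hx, mul_ne_zero (exp_ne_zero _) (ofReal_ne_zero.mpr hux)⟩
  have hlam := h (fun x => planeWave t x * u x)
    ((contDiff_planeWave t).mul (ofRealCLM.contDiff.comp hu)) hy
    (quasiPeriodicBC_planeWave_mul_ofReal (hu.differentiable two_ne_zero) h₀ h₁)
  rwa [rayleighQuotientR_planeWave_mul_ofReal hq t hu h₀ h₁,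
    le_div_iff₀ (integral_sq_pos zero_lt_one hu.continuous hne)] at hlam

lemma le_sq_add_integral (h : IsVariationalLowerBound q t lam)
    (hq : IntervalIntegrable q volume 0 1) : lam ≤ t ^ 2 + ∫ x in (0:ℝ)..1, q x := by
  simpa using h.mul_integral_sq_le hq (u := fun _ => 1) contDiff_const rfl (by simp)
    ⟨0, by norm_num, one_ne_zero⟩

lemma integral_sub_mul_eq_zero
    (h : IsVariationalLowerBound q t (t ^ 2 + ∫ x in (0:ℝ)..1, q x))
    (hq : IntervalIntegrable q volume 0 1) {g : ℝ → ℝ} (hg : ContDiff ℝ 2 g)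
    (hsupp : tsupport g ⊆ Set.Ioo 0 1) :
    ∫ x in (0:ℝ)..1, (q x - ∫ x in (0:ℝ)..1, q x) * g x = 0 := by
  set Q := ∫ x in (0:ℝ)..1, q x
  obtain ⟨hg₀, hg₀'⟩ := eq_zero_and_deriv_eq_zero_of_notMem_tsupport
    fun hmem => lt_irrefl _ (hsupp hmem).1
  obtain ⟨hg₁, hg₁'⟩ := eq_zero_and_deriv_eq_zero_of_notMem_tsupport
    fun hmem => lt_irrefl _ (hsupp hmem).2
  refine integral_mul_eq_zero_of_forall_nonneg (C := ∫ x in (0:ℝ)..1, deriv g x ^ 2)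
    (hq.sub intervalIntegrable_const) ?_ hg.continuous fun ε => ?_
  · rw [integral_sub hq intervalIntegrable_const]
    simp [Q]
  set u : ℝ → ℝ := fun x => 1 + ε * g x
  have hu : ContDiff ℝ 2 u := contDiff_const.add (contDiff_const.mul hg)
  have hu' : deriv u = fun x => ε * deriv g x := funext fun x =>
    (((hg.differentiable two_ne_zero x).hasDerivAt.const_mul ε).const_add 1).deriv
  have hbound := h.mul_integral_sq_le hq hu (by simp [u, hg₀, hg₁]) (by simp [hu', hg₀', hg₁'])
    ⟨0, by norm_num, by simp [u, hg₀]⟩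
  have hpot : ∫ x in (0:ℝ)..1, (q x - Q) * u x ^ 2 =
      (∫ x in (0:ℝ)..1, q x * u x ^ 2) - Q * ∫ x in (0:ℝ)..1, u x ^ 2 := by
    have hu2 : Continuous fun x => u x ^ 2 := hu.continuous.pow 2
    rw [← intervalIntegral.integral_const_mul, ← intervalIntegral.integral_sub
      (hq.mul_continuousOn hu2.continuousOn) ((hu2.intervalIntegrable 0 1).const_mul Q)]
    congr 1 with x
    ring
  have hkin : ∫ x in (0:ℝ)..1, deriv u x ^ 2 = ε ^ 2 * ∫ x in (0:ℝ)..1, deriv g x ^ 2 := by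
    simp [hu', mul_pow]
  rw [hpot]
  linarith

end IsVariationalLowerBound

lemma isEigenfunction_planeWave {q : ℝ → ℝ} {c : ℝ} (t : ℝ)
    (hq : ∀ᵐ x, x ∈ Set.Icc (0:ℝ) 1 → q x = c) :
    IsEigenfunction q t (t ^ 2 + c) (planeWave t) := by
  have hderiv : deriv (planeWave t) = fun x => planeWave t x * (I * t) :=
    funext fun x => (hasDerivAt_planeWave t x).deriv
  have hderiv2 : ∀ x, deriv (deriv (planeWave t)) x = planeWave t x * (I * t) ^ 2 := fun x => by
    rw [hderiv, ((hasDerivAt_planeWave t x).mul_const (I * t)).deriv]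
    ring
  refine ⟨contDiff_planeWave t, ⟨0, by norm_num, by simp [planeWave]⟩, ⟨?_, ?_⟩, ?_⟩
  · simp [planeWave]
  · simp [hderiv, planeWave]
  · filter_upwards [hq] with x hx hmem
    rw [hderiv2, hx hmem]
    push_cast
    linear_combination (-(t : ℂ) ^ 2 * planeWave t x) * I_sq

theorem first_eigenvalue_eq_of_ge_general (q : ℝ → ℝ)
    (hq : IntegrableOn q (Set.Icc (0:ℝ) 1)) (t : ℝ)
    (lam0 : ℝ)
    (hvar : ∀ y : ℝ → ℂ, ContDiff ℝ 2 y → (∃ x ∈ Set.Icc (0:ℝ) 1, y x ≠ 0) →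
      QuasiPeriodicBC t y → lam0 ≤ rayleighQuotientR q y)
    (hge : lam0 ≥ t^2 + ∫ x in (0:ℝ)..1, q x) :
    lam0 = t^2 + (∫ x in (0:ℝ)..1, q x) ∧
    IsEigenfunction q t lam0 (fun x : ℝ => Complex.exp (Complex.I * t * x)) := by
  have hqi : IntervalIntegrable q volume 0 1 :=
    (intervalIntegrable_iff_integrableOn_Icc_of_le zero_le_one).mpr hq
  have heq : lam0 = t ^ 2 + ∫ x in (0:ℝ)..1, q x :=
    le_antisymm (IsVariationalLowerBound.le_sq_add_integral hvar hqi) hge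
  subst heq
  have hconst : ∀ᵐ x, x ∈ Set.Icc (0:ℝ) 1 → q x = ∫ x in (0:ℝ)..1, q x :=
    ae_eq_of_forall_integral_sub_mul_eq_zero zero_le_one hq fun g hg hsupp =>
      IsVariationalLowerBound.integral_sub_mul_eq_zero hvar hqi
        (hg.of_le (WithTop.coe_le_coe.mpr le_top)) hsupp
  exact ⟨rfl, isEigenfunction_planeWave t hconst⟩

/-- if the first eigenvalue `λ₀(t)` of the quasi-periodic problem (which
satisfies the variational principle) obeys `λ₀(t) ≥ t² + ∫₀¹ q`, then equality holds and
`x ↦ exp(i t x)` is a corresponding eigenfunction. -/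
theorem first_eigenvalue_eq_of_ge (q : ℝ → ℝ)
    (hq : IntegrableOn q (Set.Icc (0:ℝ) 1)) (t : ℝ) (ht : t ∈ Set.Ico 0 Real.pi)
    (lam0 : ℝ) (hfirst : IsFirstEigenvalue q t lam0)
    (hvar : ∀ y : ℝ → ℂ, ContDiff ℝ 2 y → (∃ x ∈ Set.Icc (0:ℝ) 1, y x ≠ 0) →
      QuasiPeriodicBC t y → lam0 ≤ rayleighQuotientR q y)
    (hge : lam0 ≥ t^2 + ∫ x in (0:ℝ)..1, q x) :
    lam0 = t^2 + (∫ x in (0:ℝ)..1, q x) ∧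
    IsEigenfunction q t lam0 (fun x : ℝ => Complex.exp (Complex.I * t * x)) :=
  first_eigenvalue_eq_of_ge_general q hq t lam0 hvar hge
end

section
/- Let q ∈ L¹[0,1] be real-valued and t ∈ [0,π). If λ₀(t), the first eigenvalue of the quasi-periodic problem L_t(q), satisfies λ₀(t) ≥ t² + ∫₀¹ q(x) dx, then q(x) = ∫₀¹ q(s) ds almost everywhere on [0,1]. -/
open MeasureTheory intervalIntegral Complex


open MeasureTheory intervalIntegral Complex

open scoped ContDiff ComplexConjugate

/-!
Test the variational principle with `y x = exp (i t x) * (1 + ε g x)`, where `g` is smooth and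
supported in `(0, 1)`; `y` is quasi-periodic and `|y|² = (1 + ε g)²`. Since the phase has modulus
one, `Re (-conj y * y'') = t² u² - u u''` with `u = 1 + ε g`, so `λ₀ ≥ t² + Q`, `Q = ∫₀¹ q`, gives
`0 ≤ ∫ ((q - Q) u² - u u'') = 2 ε ∫ (q - Q) g + O(ε²)` for every real `ε`, using
`∫ (q - Q) = 0` and `∫ g'' = 0`. Hence `∫ (q - Q) g = 0` for all such `g`, and `q = Q`
a.e. by the fundamental lemma of the calculus of variations.
-/

lemma hasDerivAt_cexp_mul {w : ℝ → ℂ} {w' : ℂ} {x : ℝ} (t : ℝ) (hw : HasDerivAt w w' x) :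
    HasDerivAt (fun x : ℝ => cexp (I * t * x) * w x) (cexp (I * t * x) * (I * t * w x + w')) x := by
  have hphase : HasDerivAt (fun x : ℝ => I * t * x) (I * t) x := by
    simpa using (hasDerivAt_id x).ofReal_comp.const_mul (I * t)
  exact (hphase.cexp.fun_mul hw).congr_deriv (by ring)

lemma deriv_cexp_mul_ofReal (t : ℝ) {u : ℝ → ℝ} (hu : Differentiable ℝ u) :
    deriv (fun x : ℝ => cexp (I * t * x) * u x) =
      fun x : ℝ => cexp (I * t * x) * (I * t * u x + deriv u x) :=
  funext fun x => (hasDerivAt_cexp_mul t (hu x).hasDerivAt.ofReal_comp).deriv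

lemma deriv_deriv_cexp_mul_ofReal (t : ℝ) {u : ℝ → ℝ} (hu : ContDiff ℝ 2 u) :
    deriv (deriv (fun x : ℝ => cexp (I * t * x) * u x)) =
      fun x : ℝ =>
        cexp (I * t * x) * (-t ^ 2 * u x + 2 * I * t * deriv u x + deriv (deriv u) x) := by
  rw [deriv_cexp_mul_ofReal t (hu.differentiable (by norm_num))]
  funext x
  have hu' := (hu.differentiable (by norm_num) x).hasDerivAt.ofReal_comp
  have hu'' := (hu.differentiable_deriv_two x).hasDerivAt.ofReal_comp
  rw [(hasDerivAt_cexp_mul t ((hu'.const_mul (I * t)).fun_add hu'')).deriv]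
  linear_combination (cexp (I * t * x) * (t : ℂ) ^ 2 * u x) * I_sq

lemma conj_cexp_mul_I_mul_self (t x : ℝ) : conj (cexp (I * t * x)) * cexp (I * t * x) = 1 := by
  rw [← exp_conj, ← Complex.exp_add]
  simp

lemma re_neg_conj_cexp_mul (t x u u' u'' : ℝ) :
    (-conj (cexp (I * t * x) * u) *
      (cexp (I * t * x) * (-t ^ 2 * u + 2 * I * t * u' + u''))).re = t ^ 2 * u ^ 2 - u * u'' := by
  have hcomplex : -conj (cexp (I * t * x) * u) *
      (cexp (I * t * x) * (-t ^ 2 * u + 2 * I * t * u' + u'')) =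
        ((t ^ 2 * u ^ 2 - u * u'' : ℝ) : ℂ) + ((-2 * t * u * u' : ℝ) : ℂ) * I := by
    rw [map_mul, conj_ofReal]
    push_cast
    linear_combination (-(u : ℂ) * (-t ^ 2 * u + 2 * I * t * u' + u'')) *
      conj_cexp_mul_I_mul_self t x
  rw [hcomplex, add_re, ofReal_re, re_ofReal_mul, I_re, mul_zero, add_zero]

lemma norm_cexp_mul_ofReal_sq (t x u : ℝ) : ‖cexp (I * t * x) * u‖ ^ 2 = u ^ 2 := by
  rw [norm_mul, mul_assoc, ← ofReal_mul, norm_exp_I_mul_ofReal, norm_real, Real.norm_eq_abs,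
    one_mul, sq_abs]

lemma rayleighQuotientR_cexp_mul_ofReal (q : ℝ → ℝ) (t : ℝ) {u : ℝ → ℝ} (hu : ContDiff ℝ 2 u) :
    rayleighQuotientR q (fun x : ℝ => cexp (I * t * x) * u x) =
      (∫ x in (0:ℝ)..1, (t ^ 2 * u x ^ 2 - u x * deriv (deriv u) x + q x * u x ^ 2)) /
        ∫ x in (0:ℝ)..1, u x ^ 2 := by
  simp only [rayleighQuotientR, deriv_deriv_cexp_mul_ofReal t hu, re_neg_conj_cexp_mul,
    norm_cexp_mul_ofReal_sq]

lemma quasiPeriodicBC_cexp_mul_ofReal (t : ℝ) {u : ℝ → ℝ} (hu : Differentiable ℝ u)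
    (h1 : u 1 = u 0) (h1' : deriv u 1 = deriv u 0) :
    QuasiPeriodicBC t (fun x : ℝ => cexp (I * t * x) * u x) := by
  refine ⟨?_, ?_⟩ <;> simp [deriv_cexp_mul_ofReal t hu, h1, h1']

lemma contDiff_cexp_mul_ofReal (t : ℝ) {n : WithTop ℕ∞} {u : ℝ → ℝ} (hu : ContDiff ℝ n u) :
    ContDiff ℝ n (fun x : ℝ => cexp (I * t * x) * u x) :=
  (contDiff_const.mul ofRealCLM.contDiff).cexp.mul (ofRealCLM.contDiff.comp hu)

lemma integral_sub_mean_mul_sq_sub_nonneg {q : ℝ → ℝ} {t lam0 : ℝ}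
    (hq : IntegrableOn q (Set.Icc (0:ℝ) 1))
    (hvar : ∀ y : ℝ → ℂ, ContDiff ℝ 2 y → (∃ x ∈ Set.Icc (0:ℝ) 1, y x ≠ 0) →
      QuasiPeriodicBC t y → lam0 ≤ rayleighQuotientR q y)
    (hge : lam0 ≥ t ^ 2 + ∫ x in (0:ℝ)..1, q x)
    {u : ℝ → ℝ} (hu : ContDiff ℝ 2 u) (hu0 : u 0 ≠ 0) (h1 : u 1 = u 0)
    (h1' : deriv u 1 = deriv u 0) :
    0 ≤ ∫ x in (0:ℝ)..1, ((q x - ∫ s in (0:ℝ)..1, q s) * u x ^ 2 - u x * deriv (deriv u) x) := by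
  set Q := ∫ s in (0:ℝ)..1, q s
  have hu2 : Continuous fun x => u x ^ 2 := hu.continuous.pow 2
  have huu'' : Continuous fun x => u x * deriv (deriv u) x :=
    hu.continuous.mul ((hu.deriv' (n := 1)).continuous_deriv le_rfl)
  have hqu2 : IntervalIntegrable (fun x => q x * u x ^ 2) volume 0 1 :=
    ((intervalIntegrable_iff_integrableOn_Icc_of_le zero_le_one).mpr hq).mul_continuousOn
      hu2.continuousOn
  have hD : 0 < ∫ x in (0:ℝ)..1, u x ^ 2 :=
    integral_pos zero_lt_one hu2.continuousOn (fun _ _ => sq_nonneg _)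
      ⟨0, by simp, by positivity⟩
  have hR := hvar _ (contDiff_cexp_mul_ofReal t hu)
    ⟨0, by simp, by simpa using hu0⟩
    (quasiPeriodicBC_cexp_mul_ofReal t (hu.differentiable (by norm_num)) h1 h1')
  rw [rayleighQuotientR_cexp_mul_ofReal q t hu, le_div_iff₀ hD] at hR
  have hsplit : ∫ x in (0:ℝ)..1, ((q x - Q) * u x ^ 2 - u x * deriv (deriv u) x) =
      (∫ x in (0:ℝ)..1, (t ^ 2 * u x ^ 2 - u x * deriv (deriv u) x + q x * u x ^ 2)) -
        (t ^ 2 + Q) * ∫ x in (0:ℝ)..1, u x ^ 2 := by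
    have hN : IntervalIntegrable
        (fun x => t ^ 2 * u x ^ 2 - u x * deriv (deriv u) x + q x * u x ^ 2) volume 0 1 :=
      (((hu2.const_mul _).sub huu'').intervalIntegrable 0 1).add hqu2
    rw [← intervalIntegral.integral_const_mul,
      ← intervalIntegral.integral_sub hN ((hu2.const_mul _).intervalIntegrable 0 1)]
    exact intervalIntegral.integral_congr fun x _ => by ring
  rw [hsplit]
  nlinarith

lemma integral_mul_eq_zero_of_integral_mul_sq_sub_nonneg {f : ℝ → ℝ}
    (hf : IntervalIntegrable f volume 0 1) (hmean : ∫ x in (0:ℝ)..1, f x = 0)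
    (hform : ∀ u : ℝ → ℝ, ContDiff ℝ 2 u → u 0 ≠ 0 → u 1 = u 0 → deriv u 1 = deriv u 0 →
      0 ≤ ∫ x in (0:ℝ)..1, (f x * u x ^ 2 - u x * deriv (deriv u) x))
    {g : ℝ → ℝ} (hg : ContDiff ℝ 2 g) (h0 : g 0 = 0) (h1 : g 1 = 0) (h0' : deriv g 0 = 0)
    (h1' : deriv g 1 = 0) :
    ∫ x in (0:ℝ)..1, f x * g x = 0 := by
  have hg'' : Continuous (deriv (deriv g)) := (hg.deriv' (n := 1)).continuous_deriv le_rfl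
  have hfg : IntervalIntegrable (fun x => f x * g x) volume 0 1 :=
    hf.mul_continuousOn hg.continuous.continuousOn
  have hquad : IntervalIntegrable (fun x => f x * g x ^ 2 - g x * deriv (deriv g) x) volume 0 1 :=
    (hf.mul_continuousOn (hg.continuous.pow 2).continuousOn).sub
      ((hg.continuous.mul hg'').intervalIntegrable 0 1)
  have hg''_int : ∫ x in (0:ℝ)..1, deriv (deriv g) x = 0 := by
    rw [integral_deriv_eq_sub (fun x _ => hg.differentiable_deriv_two x)
      (hg''.intervalIntegrable 0 1), h1', h0', sub_self]
  have hpoly : ∀ ε : ℝ,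
      0 ≤ (∫ x in (0:ℝ)..1, (f x * g x ^ 2 - g x * deriv (deriv g) x)) * (ε * ε)
        + 2 * (∫ x in (0:ℝ)..1, f x * g x) * ε + 0 := by
    intro ε
    have hderiv : deriv (fun x => 1 + ε * g x) = fun x => ε * deriv g x := by
      simp only [deriv_const_add', deriv_const_mul_field']
    have hu := hform (fun x => 1 + ε * g x) (contDiff_const.add (contDiff_const.mul hg))
      (by simp [h0]) (by simp [h0, h1]) (by simp [hderiv, h0', h1'])
    simp only [hderiv, deriv_const_mul_field'] at hu
    have hexpand : ∀ x, f x * (1 + ε * g x) ^ 2 - (1 + ε * g x) * (ε * deriv (deriv g) x) =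
        f x + (ε * (2 * (f x * g x) - deriv (deriv g) x) +
          ε ^ 2 * (f x * g x ^ 2 - g x * deriv (deriv g) x)) := fun x => by ring
    simp only [hexpand] at hu
    have hlin :
        IntervalIntegrable (fun x => ε * (2 * (f x * g x) - deriv (deriv g) x)) volume 0 1 :=
      ((hfg.const_mul 2).sub (hg''.intervalIntegrable 0 1)).const_mul ε
    rw [intervalIntegral.integral_add hf (hlin.add (hquad.const_mul _)),
      intervalIntegral.integral_add hlin (hquad.const_mul _),
      intervalIntegral.integral_const_mul, intervalIntegral.integral_const_mul,
      intervalIntegral.integral_sub (hfg.const_mul 2) (hg''.intervalIntegrable 0 1),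
      intervalIntegral.integral_const_mul, hmean, hg''_int] at hu
    linarith
  have := discrim_le_zero hpoly
  rw [discrim] at this
  nlinarith

lemma ae_eq_zero_of_integral_mul_eq_zero {f : ℝ → ℝ} {a b : ℝ} (hab : a ≤ b)
    (hf : IntegrableOn f (Set.Icc a b))
    (h : ∀ g : ℝ → ℝ, ContDiff ℝ ∞ g → tsupport g ⊆ Set.Ioo a b → ∫ x in a..b, f x * g x = 0) :
    ∀ᵐ x, x ∈ Set.Icc a b → f x = 0 := by
  rw [← ae_restrict_iff' measurableSet_Icc, ← Measure.restrict_congr_set Ioo_ae_eq_Icc,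
    ae_restrict_iff' measurableSet_Ioo]
  refine isOpen_Ioo.ae_eq_zero_of_integral_contDiff_smul_eq_zero
    (hf.mono_set Set.Ioo_subset_Icc_self).locallyIntegrableOn fun g hg _ hsupp => ?_
  have hvanish : ∀ x ∉ Set.Ioc a b, g x • f x = 0 := fun x hx => by
    rw [image_eq_zero_of_notMem_tsupport fun h => hx (Set.Ioo_subset_Ioc_self (hsupp h)),
      zero_smul]
  rw [← setIntegral_eq_integral_of_forall_compl_eq_zero hvanish, ← integral_of_le hab,
    ← h g hg hsupp]
  exact intervalIntegral.integral_congr fun x _ => by rw [smul_eq_mul, mul_comm]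

theorem ambarzumyan_quasiperiodic_a_general (q : ℝ → ℝ)
    (hq : IntegrableOn q (Set.Icc (0:ℝ) 1)) (t : ℝ)
    (lam0 : ℝ)
    (hvar : ∀ y : ℝ → ℂ, ContDiff ℝ 2 y → (∃ x ∈ Set.Icc (0:ℝ) 1, y x ≠ 0) →
      QuasiPeriodicBC t y → lam0 ≤ rayleighQuotientR q y)
    (hge : lam0 ≥ t^2 + ∫ x in (0:ℝ)..1, q x) :
    ∀ᵐ x, x ∈ Set.Icc (0:ℝ) 1 → q x = ∫ s in (0:ℝ)..1, q s := by
  set Q := ∫ s in (0:ℝ)..1, q s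
  have hf : IntegrableOn (fun x => q x - Q) (Set.Icc (0:ℝ) 1) :=
    hq.sub (integrableOn_const (by simp))
  have hmean : ∫ x in (0:ℝ)..1, (q x - Q) = 0 := by
    rw [intervalIntegral.integral_sub ((intervalIntegrable_iff_integrableOn_Icc_of_le
      zero_le_one).mpr hq) intervalIntegrable_const]
    simp [Q]
  have hq_ae := ae_eq_zero_of_integral_mul_eq_zero zero_le_one hf fun g hg hsupp => by
    have hout : ∀ x ∉ Set.Ioo (0:ℝ) 1, x ∉ tsupport g := fun x hx h => hx (hsupp h)
    have h0 := hout 0 (by simp)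
    have h1 := hout 1 (by simp)
    exact integral_mul_eq_zero_of_integral_mul_sq_sub_nonneg
      ((intervalIntegrable_iff_integrableOn_Icc_of_le zero_le_one).mpr hf) hmean
      (fun _ hu hu0 hu1 hu1' => integral_sub_mean_mul_sq_sub_nonneg hq hvar hge hu hu0 hu1 hu1')
      (hg.of_le (by norm_cast)) (image_eq_zero_of_notMem_tsupport h0)
      (image_eq_zero_of_notMem_tsupport h1) (deriv_of_notMem_tsupport h0)
      (deriv_of_notMem_tsupport h1)
  filter_upwards [hq_ae] with x hx hxI using sub_eq_zero.mp (hx hxI)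

/-- Theorem 3(a): if the first eigenvalue `λ₀(t)`, `t ∈ [0,π)`, of the
quasi-periodic problem `L_t(q)` satisfies `λ₀(t) ≥ t² + ∫₀¹ q`, then `q` is a.e. equal to
its mean value. -/
theorem ambarzumyan_quasiperiodic_a (q : ℝ → ℝ)
    (hq : IntegrableOn q (Set.Icc (0:ℝ) 1)) (t : ℝ) (ht : t ∈ Set.Ico 0 Real.pi)
    (lam0 : ℝ) (hfirst : IsFirstEigenvalue q t lam0)
    (hvar : ∀ y : ℝ → ℂ, ContDiff ℝ 2 y → (∃ x ∈ Set.Icc (0:ℝ) 1, y x ≠ 0) →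
      QuasiPeriodicBC t y → lam0 ≤ rayleighQuotientR q y)
    (hge : lam0 ≥ t^2 + ∫ x in (0:ℝ)..1, q x) :
    ∀ᵐ x, x ∈ Set.Icc (0:ℝ) 1 → q x = ∫ s in (0:ℝ)..1, q s :=
  ambarzumyan_quasiperiodic_a_general q hq t lam0 hvar hge
end

section
/- Let q ∈ L¹[0,1] be real-valued and t ∈ [π,2π). If λ₀(t), the first eigenvalue of the quasi-periodic problem L_t(q), satisfies λ₀(t) ≥ (2π−t)² + ∫₀¹ q(x) dx, then q(x) = ∫₀¹ q(s) ds almost everywhere on [0,1]. In particular, the test function y(x) = e^{i(t−2π)x} is a first eigenfunction with eigenvalue (2π−t)² + ∫₀¹ q dx. -/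
open MeasureTheory intervalIntegral Complex


open MeasureTheory intervalIntegral Complex

/-!
With `α = t - 2π` the plane wave `e^{iαx}` satisfies the quasi-periodic conditions, since
`e^{iα} = e^{it}`, and its Rayleigh quotient is `α² + ∫₀¹ q`. The variational principle thus
forces `λ₀(t) = α² + ∫₀¹ q`, so the plane wave minimises the Rayleigh quotient. Testing with
`e^{iαx} (1 + ε g)` for `g` supported in `(0,1)` gives
`0 ≤ 2ε ∫ (q - ∫ q) g + O(ε²)` for every `ε`, hence `∫ (q - ∫ q) g = 0`, and the fundamental
lemma of the calculus of variations shows that `q` equals its mean almost everywhere.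
-/

open scoped ContDiff

lemma ContDiff.continuous_deriv_deriv {𝕜 E : Type*} [NontriviallyNormedField 𝕜]
    [NormedAddCommGroup E] [NormedSpace 𝕜 E] {f : 𝕜 → E} (hf : ContDiff 𝕜 2 f) :
    Continuous (deriv (deriv f)) :=
  (hf.deriv' (n := 1)).continuous_deriv_one

lemma eq_zero_of_forall_nonneg_mul_add_sq_mul {K : Type*} [Field K] [LinearOrder K]
    [IsStrictOrderedRing K] {b c : K} (h : ∀ ε : K, 0 ≤ ε * b + ε ^ 2 * c) : b = 0 := by
  have hdisc := discrim_le_zero (a := c) (b := b) (c := 0) fun ε => by linear_combination h ε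
  rw [discrim, mul_zero, sub_zero] at hdisc
  exact pow_eq_zero_iff two_ne_zero |>.mp (le_antisymm hdisc (sq_nonneg b))

lemma intervalIntegral.integral_add_mul_add_sq_mul {a b c : ℝ → ℝ} {u v : ℝ} {μ : Measure ℝ}
    (ha : IntervalIntegrable a μ u v) (hb : IntervalIntegrable b μ u v)
    (hc : IntervalIntegrable c μ u v) (ε : ℝ) :
    ∫ x in u..v, (a x + ε * b x + ε ^ 2 * c x) ∂μ =
      (∫ x in u..v, a x ∂μ) + ε * (∫ x in u..v, b x ∂μ) + ε ^ 2 * ∫ x in u..v, c x ∂μ := by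
  rw [integral_add (ha.add (hb.const_mul ε)) (hc.const_mul _), integral_add ha (hb.const_mul ε),
    integral_const_mul, integral_const_mul]

lemma ae_eq_zero_of_forall_intervalIntegral_mul_eq_zero {h : ℝ → ℝ} {a b : ℝ} (hab : a ≤ b)
    (hh : IntegrableOn h (Set.Icc a b))
    (H : ∀ g : ℝ → ℝ, ContDiff ℝ ∞ g → HasCompactSupport g → tsupport g ⊆ Set.Ioo a b →
      ∫ x in a..b, h x * g x = 0) :
    ∀ᵐ x, x ∈ Set.Icc a b → h x = 0 := by
  have hIoo : ∀ᵐ x, x ∈ Set.Ioo a b → h x = 0 := by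
    refine isOpen_Ioo.ae_eq_zero_of_integral_contDiff_smul_eq_zero
      (hh.mono_set Set.Ioo_subset_Icc_self).locallyIntegrableOn fun g hg hgc hsupp => ?_
    have hout : ∀ x ∉ Set.Ioc a b, g x • h x = 0 := fun x hx => by
      rw [image_eq_zero_of_notMem_tsupport
        fun hx' => hx (Set.Ioo_subset_Ioc_self (hsupp hx')), zero_smul]
    rw [← setIntegral_eq_integral_of_forall_compl_eq_zero hout, ← integral_of_le hab]
    simpa only [smul_eq_mul, mul_comm] using H g hg hgc hsupp
  filter_upwards [hIoo, Ioo_ae_eq_Icc.mem_iff] with x hx hmem hxIcc using hx (hmem.mpr hxIcc)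

lemma cexp_I_mul_sub_two_pi (t : ℝ) : exp (I * ↑(t - 2 * Real.pi)) = exp (I * t) := by
  rw [show I * ↑(t - 2 * Real.pi) = I * t - 2 * Real.pi * I by push_cast; ring, exp_sub,
    exp_two_pi_mul_I, div_one]

lemma norm_cexp_I_mul_ofReal (α x : ℝ) : ‖exp (I * α * x)‖ = 1 := by
  simp [norm_exp]

lemma hasDerivAt_cexp_I_mul_mul (α : ℝ) {F : ℝ → ℂ} {F' : ℂ} {x : ℝ}
    (hF : HasDerivAt F F' x) :
    HasDerivAt (fun x : ℝ => exp (I * α * x) * F x)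
      (exp (I * α * x) * (I * α * F x + F')) x := by
  have hexp : HasDerivAt (fun x : ℝ => exp (I * α * x)) (exp (I * α * x) * (I * α)) x := by
    simpa using (((hasDerivAt_id (x : ℂ)).const_mul (I * α)).cexp).comp_ofReal
  exact (hexp.mul hF).congr_deriv (by ring)

noncomputable def modulate (α : ℝ) (f : ℝ → ℝ) (x : ℝ) : ℂ :=
  exp (I * α * x) * f x

lemma contDiff_modulate (α : ℝ) {f : ℝ → ℝ} (hf : ContDiff ℝ 2 f) :
    ContDiff ℝ 2 (modulate α f) :=
  (((contDiff_exp (𝕜 := ℂ)).restrict_scalars ℝ).comp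
    (contDiff_const.mul ofRealCLM.contDiff)).mul (ofRealCLM.contDiff.comp hf)

lemma deriv_modulate (α : ℝ) {f : ℝ → ℝ} (hf : Differentiable ℝ f) (x : ℝ) :
    deriv (modulate α f) x = exp (I * α * x) * (I * α * f x + deriv f x) :=
  (hasDerivAt_cexp_I_mul_mul α (hf x).hasDerivAt.ofReal_comp).deriv

lemma deriv_deriv_modulate (α : ℝ) {f : ℝ → ℝ} (hf : ContDiff ℝ 2 f) (x : ℝ) :
    deriv (deriv (modulate α f)) x =
      exp (I * α * x) * (-(α : ℂ) ^ 2 * f x + 2 * I * α * deriv f x + deriv (deriv f) x) := by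
  have hf' : HasDerivAt f (deriv f x) x := (hf.differentiable two_ne_zero x).hasDerivAt
  have hf'' : HasDerivAt (deriv f) (deriv (deriv f) x) x :=
    (hf.differentiable_deriv_two x).hasDerivAt
  rw [funext (deriv_modulate α (hf.differentiable two_ne_zero)),
    (hasDerivAt_cexp_I_mul_mul α (F := fun y => I * α * f y + deriv f y)
      ((hf'.ofReal_comp.const_mul (I * α)).add hf''.ofReal_comp)).deriv]
  linear_combination exp (I * α * x) * (α : ℂ) ^ 2 * f x * I_sq

lemma quasiPeriodicBC_modulate {t α : ℝ} (hα : exp (I * α) = exp (I * t)) {f : ℝ → ℝ}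
    (hf : Differentiable ℝ f) (hf1 : f 1 = f 0) (hd1 : deriv f 1 = deriv f 0) :
    QuasiPeriodicBC t (modulate α f) := by
  refine ⟨?_, ?_⟩
  · simp only [modulate, ofReal_one, ofReal_zero, mul_one, mul_zero, exp_zero, one_mul, hf1, hα]
  · simp only [deriv_modulate α hf, ofReal_one, ofReal_zero, mul_one, mul_zero, exp_zero,
      one_mul, hf1, hd1, hα]

lemma re_neg_conj_modulate_mul_deriv_deriv (α : ℝ) {f : ℝ → ℝ} (hf : ContDiff ℝ 2 f) (x : ℝ) :
    (-(starRingEnd ℂ) (modulate α f x) * deriv (deriv (modulate α f)) x).re =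
      α ^ 2 * f x ^ 2 - f x * deriv (deriv f) x := by
  have hunit : (starRingEnd ℂ) (exp (I * α * x)) * exp (I * α * x) = 1 := by
    rw [conj_mul', norm_cexp_I_mul_ofReal]; simp
  rw [deriv_deriv_modulate α hf x, modulate, map_mul, conj_ofReal]
  calc _ = (-(f x : ℂ) * ((starRingEnd ℂ) (exp (I * α * x)) * exp (I * α * x)) *
        (-(α : ℂ) ^ 2 * f x + 2 * I * α * deriv f x + deriv (deriv f) x)).re := by ring_nf
    _ = _ := by
      rw [hunit]
      simp only [mul_one, neg_mul, neg_re, mul_re, ofReal_re, ofReal_im, add_re, add_im, pow_two,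
        I_re, I_im, re_ofNat, im_ofNat, mul_im, neg_im]
      ring

lemma rayleighQuotientR_modulate (α : ℝ) (q : ℝ → ℝ) {f : ℝ → ℝ} (hf : ContDiff ℝ 2 f) :
    rayleighQuotientR q (modulate α f) =
      (∫ x in (0:ℝ)..1, (α ^ 2 * f x ^ 2 - f x * deriv (deriv f) x + q x * f x ^ 2)) /
        ∫ x in (0:ℝ)..1, f x ^ 2 := by
  have hnorm : ∀ x, ‖modulate α f x‖ ^ 2 = f x ^ 2 := fun x => by
    rw [modulate, norm_mul, norm_cexp_I_mul_ofReal, one_mul, norm_real, Real.norm_eq_abs, sq_abs]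
  simp only [rayleighQuotientR, hnorm, re_neg_conj_modulate_mul_deriv_deriv α hf]

lemma integral_nonneg_of_le_rayleighQuotientR_modulate {q : ℝ → ℝ}
    (hq : IntervalIntegrable q volume 0 1) {α μ : ℝ} {f : ℝ → ℝ} (hf : ContDiff ℝ 2 f)
    (hf0 : f 0 ≠ 0) (h : α ^ 2 + μ ≤ rayleighQuotientR q (modulate α f)) :
    0 ≤ ∫ x in (0:ℝ)..1, (-(f x * deriv (deriv f) x) + (q x - μ) * f x ^ 2) := by
  have hf2 : Continuous fun x => f x ^ 2 := hf.continuous.pow 2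
  have hff'' : Continuous fun x => f x * deriv (deriv f) x :=
    hf.continuous.mul hf.continuous_deriv_deriv
  have hD : 0 < ∫ x in (0:ℝ)..1, f x ^ 2 :=
    integral_pos zero_lt_one hf2.continuousOn (fun _ _ => sq_nonneg _)
      ⟨0, by simp, by positivity⟩
  rw [rayleighQuotientR_modulate α q hf, le_div_iff₀ hD] at h
  have hsplit : ∫ x in (0:ℝ)..1, (-(f x * deriv (deriv f) x) + (q x - μ) * f x ^ 2) =
      (∫ x in (0:ℝ)..1, (α ^ 2 * f x ^ 2 - f x * deriv (deriv f) x + q x * f x ^ 2)) -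
        (α ^ 2 + μ) * ∫ x in (0:ℝ)..1, f x ^ 2 := by
    rw [← intervalIntegral.integral_const_mul, ← intervalIntegral.integral_sub]
    · congr 1 with x; ring
    · exact (((hf2.const_mul _).sub hff'').intervalIntegrable 0 1).add
        (hq.mul_continuousOn hf2.continuousOn)
    · exact (hf2.const_mul _).intervalIntegrable 0 1
  linarith

lemma integral_sub_mean_mul_eq_zero_of_forall_nonneg {q : ℝ → ℝ}
    (hq : IntervalIntegrable q volume 0 1) {g : ℝ → ℝ} (hg : ContDiff ℝ 2 g)
    (hg' : deriv g 1 = deriv g 0)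
    (h : ∀ ε : ℝ, 0 ≤ ∫ x in (0:ℝ)..1,
      (-((1 + ε * g x) * deriv (deriv fun y => 1 + ε * g y) x)
        + (q x - ∫ s in (0:ℝ)..1, q s) * (1 + ε * g x) ^ 2)) :
    ∫ x in (0:ℝ)..1, (q x - ∫ s in (0:ℝ)..1, q s) * g x = 0 := by
  set m := ∫ s in (0:ℝ)..1, q s
  have hg''c : Continuous (deriv (deriv g)) := hg.continuous_deriv_deriv
  have hqm : IntervalIntegrable (fun x => q x - m) volume 0 1 := hq.sub intervalIntegrable_const
  have hqmg : IntervalIntegrable (fun x => 2 * ((q x - m) * g x)) volume 0 1 :=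
    (hqm.mul_continuousOn hg.continuous.continuousOn).const_mul 2
  have hmean : ∫ x in (0:ℝ)..1, (q x - m) = 0 := by
    rw [integral_sub hq intervalIntegrable_const]; simp [m]
  have hg'' : ∫ x in (0:ℝ)..1, deriv (deriv g) x = 0 := by
    rw [integral_deriv_eq_sub (fun x _ => hg.differentiable_deriv_two x)
      (hg''c.intervalIntegrable 0 1), hg', sub_self]
  have hb : IntervalIntegrable (fun x => 2 * ((q x - m) * g x) - deriv (deriv g) x)
      volume 0 1 :=
    hqmg.sub (hg''c.intervalIntegrable 0 1)
  have hc : IntervalIntegrable (fun x => (q x - m) * g x ^ 2 - g x * deriv (deriv g) x)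
      volume 0 1 :=
    (hqm.mul_continuousOn (hg.continuous.pow 2).continuousOn).sub
      ((hg.continuous.mul hg''c).intervalIntegrable 0 1)
  have hquad : ∀ ε : ℝ,
      0 ≤ ε * (∫ x in (0:ℝ)..1, (2 * ((q x - m) * g x) - deriv (deriv g) x))
        + ε ^ 2 * ∫ x in (0:ℝ)..1, ((q x - m) * g x ^ 2 - g x * deriv (deriv g) x) := by
    intro ε
    have hdd : deriv (deriv fun y => 1 + ε * g y) = fun x => ε * deriv (deriv g) x := by
      rw [deriv_const_add', deriv_const_mul_field', deriv_const_mul_field']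
    have := h ε
    rwa [hdd, integral_congr (g := fun x => (q x - m) + ε * (2 * ((q x - m) * g x) -
      deriv (deriv g) x) + ε ^ 2 * ((q x - m) * g x ^ 2 - g x * deriv (deriv g) x))
      (fun x _ => by ring), integral_add_mul_add_sq_mul hqm hb hc, hmean, zero_add] at this
  have hlin := eq_zero_of_forall_nonneg_mul_add_sq_mul hquad
  rw [integral_sub hqmg (hg''c.intervalIntegrable 0 1), hg'', sub_zero,
    intervalIntegral.integral_const_mul] at hlin
  simpa using hlin

lemma integral_sub_mean_mul_eq_zero_of_le_rayleighQuotientR {q : ℝ → ℝ}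
    (hq : IntervalIntegrable q volume 0 1) {α : ℝ}
    (hmin : ∀ f : ℝ → ℝ, ContDiff ℝ 2 f → f 0 ≠ 0 → f 1 = f 0 → deriv f 1 = deriv f 0 →
      α ^ 2 + ∫ x in (0:ℝ)..1, q x ≤ rayleighQuotientR q (modulate α f))
    {g : ℝ → ℝ} (hg : ContDiff ℝ 2 g) (hsupp : tsupport g ⊆ Set.Ioo 0 1) :
    ∫ x in (0:ℝ)..1, (q x - ∫ s in (0:ℝ)..1, q s) * g x = 0 := by
  have hvanish : ∀ x ∈ ({0, 1} : Set ℝ), g x = 0 ∧ deriv g x = 0 := by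
    intro x hx
    have hx : x ∉ tsupport g := fun h => by
      rcases hx with rfl | rfl <;> simpa using hsupp h
    exact ⟨image_eq_zero_of_notMem_tsupport hx,
      image_eq_zero_of_notMem_tsupport fun h => hx (tsupport_deriv_subset h)⟩
  obtain ⟨hg0, hd0⟩ := hvanish 0 (by simp)
  obtain ⟨hg1, hd1⟩ := hvanish 1 (by simp)
  refine integral_sub_mean_mul_eq_zero_of_forall_nonneg hq hg (hd1.trans hd0.symm) fun ε => ?_
  have hf : ContDiff ℝ 2 fun y => 1 + ε * g y := contDiff_const.add (contDiff_const.mul hg)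
  have hf0 : 1 + ε * g 0 ≠ 0 := by simp [hg0]
  refine integral_nonneg_of_le_rayleighQuotientR_modulate hq hf hf0 (hmin _ hf hf0 ?_ ?_)
  · simp [hg0, hg1]
  · simp [deriv_const_add', deriv_const_mul_field', hd0, hd1]

lemma isEigenfunction_modulate_one {q : ℝ → ℝ} {c t α : ℝ} (hα : exp (I * α) = exp (I * t))
    (hq : ∀ᵐ x, x ∈ Set.Icc (0:ℝ) 1 → q x = c) :
    IsEigenfunction q t (α ^ 2 + c) (modulate α 1) := by
  have h1 : ContDiff ℝ 2 (1 : ℝ → ℝ) := contDiff_const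
  refine ⟨contDiff_modulate α h1, ⟨0, by simp, by simp [modulate]⟩,
    quasiPeriodicBC_modulate hα (differentiable_const 1) rfl (by simp), ?_⟩
  filter_upwards [hq] with x hx hxI
  rw [deriv_deriv_modulate α h1, hx hxI]
  simp only [modulate, Pi.one_apply, deriv_one, deriv_zero, Pi.zero_apply, ofReal_one,
    ofReal_zero, ofReal_add, ofReal_pow]
  ring

theorem ambarzumyan_quasiperiodic_b_general (q : ℝ → ℝ)
    (hq : IntegrableOn q (Set.Icc (0:ℝ) 1)) (t : ℝ)
    (lam0 : ℝ)
    (hvar : ∀ y : ℝ → ℂ, ContDiff ℝ 2 y → (∃ x ∈ Set.Icc (0:ℝ) 1, y x ≠ 0) →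
      QuasiPeriodicBC t y → lam0 ≤ rayleighQuotientR q y)
    (hge : lam0 ≥ (2 * Real.pi - t)^2 + ∫ x in (0:ℝ)..1, q x) :
    (∀ᵐ x, x ∈ Set.Icc (0:ℝ) 1 → q x = ∫ s in (0:ℝ)..1, q s) ∧
    lam0 = (2 * Real.pi - t)^2 + (∫ x in (0:ℝ)..1, q x) ∧
    IsEigenfunction q t lam0
      (fun x : ℝ => Complex.exp (Complex.I * (t - 2 * Real.pi) * x)) := by
  set α := t - 2 * Real.pi
  set m := ∫ x in (0:ℝ)..1, q x
  have hα : exp (I * α) = exp (I * t) := cexp_I_mul_sub_two_pi t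
  have hqI : IntervalIntegrable q volume 0 1 :=
    (intervalIntegrable_iff_integrableOn_Icc_of_le zero_le_one).mpr hq
  have hmin : ∀ f : ℝ → ℝ, ContDiff ℝ 2 f → f 0 ≠ 0 → f 1 = f 0 → deriv f 1 = deriv f 0 →
      lam0 ≤ rayleighQuotientR q (modulate α f) := fun f hf hf0 hf1 hd1 =>
    hvar _ (contDiff_modulate α hf) ⟨0, by simp, by simpa [modulate] using hf0⟩
      (quasiPeriodicBC_modulate hα (hf.differentiable two_ne_zero) hf1 hd1)
  have hray : rayleighQuotientR q (modulate α 1) = α ^ 2 + m := by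
    rw [rayleighQuotientR_modulate α q (f := 1) contDiff_const]
    simp [integral_add intervalIntegrable_const hqI, m]
  have hsq : (2 * Real.pi - t) ^ 2 = α ^ 2 := by ring
  have hlam : lam0 = α ^ 2 + m :=
    le_antisymm (hray ▸ hmin 1 contDiff_const one_ne_zero rfl (by simp)) (hsq ▸ hge)
  have hconst : ∀ᵐ x, x ∈ Set.Icc (0:ℝ) 1 → q x = m := by
    have := ae_eq_zero_of_forall_intervalIntegral_mul_eq_zero zero_le_one
      (hq.sub (integrableOn_const measure_Icc_lt_top.ne)) fun g hg _ hsupp =>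
        integral_sub_mean_mul_eq_zero_of_le_rayleighQuotientR hqI (hlam ▸ hmin)
          (hg.of_le (WithTop.coe_le_coe.mpr le_top)) hsupp
    filter_upwards [this] with x hx hxI using sub_eq_zero.mp (hx hxI)
  have hy : (fun x : ℝ => exp (I * (t - 2 * Real.pi) * x)) = modulate α 1 := by
    funext x; simp [modulate, α]
  refine ⟨hconst, hsq ▸ hlam, ?_⟩
  rw [hy, hlam]
  exact isEigenfunction_modulate_one hα hconst

/-- Theorem 3(b): if the first eigenvalue `λ₀(t)`, `t ∈ [π,2π)`, of the
quasi-periodic problem `L_t(q)` satisfies `λ₀(t) ≥ (2π-t)² + ∫₀¹ q`, then `q` is a.e.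
equal to its mean value; moreover `x ↦ exp(i(t-2π)x)` is a first eigenfunction with
eigenvalue `(2π-t)² + ∫₀¹ q`. -/
theorem ambarzumyan_quasiperiodic_b (q : ℝ → ℝ)
    (hq : IntegrableOn q (Set.Icc (0:ℝ) 1)) (t : ℝ)
    (ht : t ∈ Set.Ico Real.pi (2 * Real.pi))
    (lam0 : ℝ) (hfirst : IsFirstEigenvalue q t lam0)
    (hvar : ∀ y : ℝ → ℂ, ContDiff ℝ 2 y → (∃ x ∈ Set.Icc (0:ℝ) 1, y x ≠ 0) →
      QuasiPeriodicBC t y → lam0 ≤ rayleighQuotientR q y)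
    (hge : lam0 ≥ (2 * Real.pi - t)^2 + ∫ x in (0:ℝ)..1, q x) :
    (∀ᵐ x, x ∈ Set.Icc (0:ℝ) 1 → q x = ∫ s in (0:ℝ)..1, q s) ∧
    lam0 = (2 * Real.pi - t)^2 + (∫ x in (0:ℝ)..1, q x) ∧
    IsEigenfunction q t lam0
      (fun x : ℝ => Complex.exp (Complex.I * (t - 2 * Real.pi) * x)) :=
  ambarzumyan_quasiperiodic_b_general q hq t lam0 hvar hge
end
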